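/- Let k ≥ 2 be an integer. Every symmetric polynomial matrix τ whose entries have total degree at most k−1 can be written as τ = ∇²q + sym(x^⊥ ⊗ v), where q is a polynomial of total degree at most k+1 and v = (v₁, v₂) is a polynomial vector field with components of total degree at most k−2; moreover v is uniquely determined by τ. -/

import Mathlib

open MvPolynomial Matrix

/-- Real polynomials in two variables. -/
abbrev P2 := MvPolynomial (Fin 2) ℝ

/-- The matrix `curl v` of a polynomial vector field, defined row-wise:
`(curl v)_{i1} = ∂₂ vᵢ`, `(curl v)_{i2} = -∂₁ vᵢ`. -/
noncomputable def pcurl (v : Fin 2 → P2) : Matrix (Fin 2) (Fin 2) P2 :=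
  Matrix.of fun i j =>
    if j = 0 then pderiv (1 : Fin 2) (v i) else -(pderiv (0 : Fin 2) (v i))

/-- `sym curl v := (curl v + (curl v)ᵀ)/2`. -/
noncomputable def psymCurl (v : Fin 2 → P2) : Matrix (Fin 2) (Fin 2) P2 :=
  (1 / 2 : ℝ) • (pcurl v + (pcurl v)ᵀ)

/-- `div div τ := Σ_{i,j} ∂ᵢ∂ⱼ τ_{ij}`. -/
noncomputable def pdivDiv (τ : Matrix (Fin 2) (Fin 2) P2) : P2 :=
  ∑ i : Fin 2, ∑ j : Fin 2, pderiv i (pderiv j (τ i j))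

/-- The matrix `x xᵀ q` with `(i,j)`-entry `Xᵢ · Xⱼ · q`. -/
noncomputable def xxT (q : P2) : Matrix (Fin 2) (Fin 2) P2 :=
  Matrix.of fun i j => X i * X j * q

/-- The polynomial vector `x^⊥ = (X₂, -X₁)`. -/
noncomputable def xPerp : Fin 2 → P2 := ![X 1, -X 0]

/-- `rot τ`, with components `(rot τ)ᵢ = ∂₁ τ_{i2} - ∂₂ τ_{i1}`. -/
noncomputable def prot (τ : Matrix (Fin 2) (Fin 2) P2) : Fin 2 → P2 :=
  fun i => pderiv (0 : Fin 2) (τ i 1) - pderiv (1 : Fin 2) (τ i 0)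

/-- The Hessian matrix `∇²q` with entries `∂ᵢ∂ⱼ q`. -/
noncomputable def phess (q : P2) : Matrix (Fin 2) (Fin 2) P2 :=
  Matrix.of fun i j => pderiv i (pderiv j q)

/-- `sym(x^⊥ ⊗ v)`, the symmetric matrix with `(i,j)`-entry
`((x^⊥)ᵢ vⱼ + vᵢ (x^⊥)ⱼ)/2`. -/
noncomputable def symTen (v : Fin 2 → P2) : Matrix (Fin 2) (Fin 2) P2 :=
  Matrix.of fun i j => (1 / 2 : ℝ) • (xPerp i * v j + v i * xPerp j)

/-- The gradient matrix `∇v` with entries `(∇v)_{ij} = ∂ⱼ vᵢ`. -/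
noncomputable def pgrad (v : Fin 2 → P2) : Matrix (Fin 2) (Fin 2) P2 :=
  Matrix.of fun i j => pderiv j (v i)

/-- The symmetric gradient `def v := (∇v + (∇v)ᵀ)/2`. -/
noncomputable def pdef (v : Fin 2 → P2) : Matrix (Fin 2) (Fin 2) P2 :=
  (1 / 2 : ℝ) • (pgrad v + (pgrad v)ᵀ)

/-- The matrix `x^⊥ (x^⊥)ᵀ q` with `(i,j)`-entry `(x^⊥)ᵢ (x^⊥)ⱼ q`. -/
noncomputable def xPerpxPerpT (q : P2) : Matrix (Fin 2) (Fin 2) P2 :=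
  Matrix.of fun i j => xPerp i * xPerp j * q

/-- `rot rot τ := ∂₁(rot τ)₂ − ∂₂(rot τ)₁`. -/
noncomputable def protRot (τ : Matrix (Fin 2) (Fin 2) P2) : P2 :=
  pderiv (0 : Fin 2) (prot τ 1) - pderiv (1 : Fin 2) (prot τ 0)

/-!
The quadratic form `A ↦ xᵀ A x` kills `sym(x^⊥ ⊗ v)`, since `x · x^⊥ = 0`, and by Euler's
identity it sends `∇²q` to `E(E q) - E q`, where `E = ∑ᵢ Xᵢ ∂ᵢ` multiplies monomials of degree `d`
by `d`; so it multiplies the degree-`d` part of `q` by `d (d - 1)`. Given `τ`, this lets us solve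
`xᵀ ∇²q x = xᵀ τ x` for `q`, and then `σ = τ - ∇²q` is a symmetric matrix with `xᵀ σ x = 0`.
In two variables this forces `X₂ ∣ σ₁₁` and `X₁ ∣ σ₂₂`, which is exactly `σ = sym(x^⊥ ⊗ v)`.
For uniqueness, two decompositions differ by a `q` with `xᵀ ∇²q x = 0`, i.e. of degree at most
one, so `∇²q = 0`; and `v ↦ sym(x^⊥ ⊗ v)` is injective.
-/

namespace MvPolynomial

theorem pderiv_pderiv_comm {σ R : Type*} [CommRing R] (i j : σ) (f : MvPolynomial σ R) :
    pderiv i (pderiv j f) = pderiv j (pderiv i f) := by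
  classical
  have h : ⁅pderiv i, pderiv j⁆ = (0 : Derivation R (MvPolynomial σ R) (MvPolynomial σ R)) :=
    derivation_ext fun k => by
      rw [Derivation.commutator_apply, pderiv_X, pderiv_X]
      simp [Pi.single_apply, apply_ite]
  have hf := DFunLike.congr_fun h f
  rwa [Derivation.commutator_apply, Derivation.zero_apply, sub_eq_zero] at hf

section CommSemiring

variable {σ R : Type*} [CommSemiring R]

theorem totalDegree_pderiv_le (i : σ) (f : MvPolynomial σ R) :
    (pderiv i f).totalDegree ≤ f.totalDegree - 1 := by
  refine Finset.sup_le fun m hm => ?_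
  have hmem : m + Finsupp.single i 1 ∈ f.support := by
    rw [mem_support_iff, coeff_pderiv] at hm
    exact mem_support_iff.mpr (left_ne_zero_of_mul hm)
  have hle : (m + Finsupp.single i 1).degree ≤ f.totalDegree := le_totalDegree hmem
  rw [map_add, Finsupp.degree_single] at hle
  change m.degree ≤ _
  omega

theorem coeff_X_mul_pderiv (i : σ) (f : MvPolynomial σ R) (n : σ →₀ ℕ) :
    coeff n (X i * pderiv i f) = n i * coeff n f := by
  classical
  rw [coeff_X_mul']
  split_ifs with hi
  · rw [Finsupp.mem_support_iff] at hi
    rw [coeff_pderiv, Finsupp.sub_add_single_one_cancel hi, Finsupp.tsub_apply,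
      Finsupp.single_eq_same, mul_comm, ← Nat.cast_add_one,
      Nat.sub_add_cancel (Nat.one_le_iff_ne_zero.mpr hi)]
  · rw [Finsupp.notMem_support_iff.mp hi, Nat.cast_zero, zero_mul]

theorem coeff_X_mul_X_mul_eq_zero (i j : σ) (f : MvPolynomial σ R) {n : σ →₀ ℕ}
    (hn : n.degree < 2) : coeff n (X i * X j * f) = 0 := by
  rw [mul_comm, X, X, monomial_mul, one_mul, coeff_mul_monomial', if_neg]
  intro hle
  have := Finsupp.degree_mono hle
  rw [map_add, Finsupp.degree_single, Finsupp.degree_single] at this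
  omega

variable [Fintype σ]

noncomputable def euler (f : MvPolynomial σ R) : MvPolynomial σ R :=
  ∑ i, X i * pderiv i f

theorem coeff_euler (f : MvPolynomial σ R) (n : σ →₀ ℕ) :
    coeff n (euler f) = n.degree * coeff n f := by
  simp only [euler, coeff_sum, coeff_X_mul_pderiv, ← Finset.sum_mul, Finsupp.degree_eq_sum,
    Nat.cast_sum]

noncomputable def xQuad (A : Matrix σ σ (MvPolynomial σ R)) : MvPolynomial σ R :=
  ∑ i, ∑ j, X i * X j * A i j

theorem coeff_xQuad_eq_zero (A : Matrix σ σ (MvPolynomial σ R)) {n : σ →₀ ℕ}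
    (hn : n.degree < 2) : coeff n (xQuad A) = 0 := by
  simp only [xQuad, coeff_sum, coeff_X_mul_X_mul_eq_zero _ _ _ hn, Finset.sum_const_zero]

theorem totalDegree_xQuad_le [Nontrivial R] {A : Matrix σ σ (MvPolynomial σ R)} {D : ℕ}
    (hA : ∀ i j, (A i j).totalDegree ≤ D) : (xQuad A).totalDegree ≤ D + 2 := by
  refine totalDegree_finsetSum_le fun i _ => totalDegree_finsetSum_le fun j _ => ?_
  calc (X i * X j * A i j).totalDegree
      ≤ (X i : MvPolynomial σ R).totalDegree + (X j : MvPolynomial σ R).totalDegree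
          + (A i j).totalDegree :=
        (totalDegree_mul _ _).trans (Nat.add_le_add_right (totalDegree_mul _ _) _)
    _ ≤ D + 2 := by rw [totalDegree_X, totalDegree_X]; linarith [hA i j]

end CommSemiring

section CommRing

variable {σ R : Type*} [CommRing R] [Fintype σ]

theorem xQuad_sub (A B : Matrix σ σ (MvPolynomial σ R)) : xQuad (A - B) = xQuad A - xQuad B := by
  simp only [xQuad, Matrix.sub_apply, mul_sub, Finset.sum_sub_distrib]

theorem sum_X_mul_X_mul_pderiv_pderiv (f : MvPolynomial σ R) :
    ∑ i, ∑ j, X i * X j * pderiv i (pderiv j f) = euler (euler f) - euler f := by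
  classical
  have hrow : ∀ i, ∑ j, X j * pderiv i (pderiv j f) = pderiv i (euler f) - pderiv i f := by
    intro i
    simp [euler, Finset.sum_add_distrib, Pi.single_apply]
  simp only [euler, mul_assoc, ← Finset.mul_sum, hrow, mul_sub,
    Finset.sum_sub_distrib]

theorem coeff_euler_euler_sub (f : MvPolynomial σ R) (n : σ →₀ ℕ) :
    coeff n (euler (euler f) - euler f) = (n.degree * (n.degree - 1) : R) * coeff n f := by
  rw [coeff_sub, coeff_euler, coeff_euler]
  ring

end CommRing

section Field

variable {σ R : Type*} [Field R] [CharZero R] [Fintype σ]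

theorem natCast_mul_natCast_sub_one_ne_zero {d : ℕ} (hd : 2 ≤ d) : (d * (d - 1) : R) ≠ 0 :=
  mul_ne_zero (Nat.cast_ne_zero.mpr (by omega))
    (sub_ne_zero.mpr (by exact_mod_cast (by omega : d ≠ 1)))

theorem exists_euler_euler_sub_eq (p : MvPolynomial σ R)
    (hp : ∀ n : σ →₀ ℕ, n.degree < 2 → coeff n p = 0) :
    ∃ q : MvPolynomial σ R, euler (euler q) - euler q = p ∧ q.totalDegree ≤ p.totalDegree := by
  classical
  set q := ∑ n ∈ p.support, monomial n (coeff n p / (n.degree * (n.degree - 1) : R))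
  have hq : ∀ n, coeff n q = coeff n p / (n.degree * (n.degree - 1) : R) := by
    intro n
    simp only [q, coeff_sum, coeff_monomial, Finset.sum_ite_eq', mem_support_iff, ite_not]
    split_ifs with h <;> simp [h]
  refine ⟨q, ext _ _ fun n => ?_, totalDegree_le_of_support_subset fun n hn => ?_⟩
  · rw [coeff_euler_euler_sub, hq]
    by_cases hn : 2 ≤ n.degree
    · exact mul_div_cancel₀ _ (natCast_mul_natCast_sub_one_ne_zero hn)
    · simp [hp n (by omega)]
  · rw [mem_support_iff, hq] at hn
    exact mem_support_iff.mpr (div_ne_zero_iff.mp hn).1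

theorem pderiv_pderiv_eq_zero_of_euler_euler_sub_eq_zero {f : MvPolynomial σ R}
    (hf : euler (euler f) - euler f = 0) (i j : σ) : pderiv i (pderiv j f) = 0 := by
  ext m
  have hn : 2 ≤ (m + Finsupp.single i 1 + Finsupp.single j 1).degree := by
    simp [Finsupp.degree_single]
  have hcoeff := congrArg (coeff (m + Finsupp.single i 1 + Finsupp.single j 1)) hf
  rw [coeff_euler_euler_sub, coeff_zero] at hcoeff
  simp [coeff_pderiv,
    (mul_eq_zero.mp hcoeff).resolve_left (natCast_mul_natCast_sub_one_ne_zero hn)]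

end Field

theorem X_dvd_of_X_dvd_X_pow_mul {σ R : Type*} [CommRing R] [IsDomain R] {i j : σ} (hij : i ≠ j)
    {n : ℕ} {a : MvPolynomial σ R} (h : X i ∣ X j ^ n * a) : X i ∣ a :=
  (X_prime.dvd_or_dvd h).resolve_left fun h' => hij (X_dvd_X.mp (X_prime.dvd_of_dvd_pow h'))

theorem totalDegree_le_sub_one_of_X_mul {σ R : Type*} [CommSemiring R] [IsDomain R] {s : σ}
    {a : MvPolynomial σ R} {D : ℕ} (h : (X s * a).totalDegree ≤ D) : a.totalDegree ≤ D - 1 := by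
  rcases eq_or_ne a 0 with rfl | ha
  · simp
  · rw [totalDegree_mul_of_isDomain (X_ne_zero s) ha, totalDegree_X] at h
    omega

end MvPolynomial

theorem C_half_mul_two : (C (1 / 2 : ℝ) : P2) * 2 = 1 := by
  rw [← map_ofNat C 2, ← C_mul]
  norm_num

theorem xQuad_phess (q : P2) : xQuad (phess q) = euler (euler q) - euler q :=
  sum_X_mul_X_mul_pderiv_pderiv q

theorem phess_transpose (q : P2) : (phess q)ᵀ = phess q :=
  Matrix.ext fun i j => pderiv_pderiv_comm j i q

theorem phess_sub (q q' : P2) : phess (q - q') = phess q - phess q' :=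
  Matrix.ext fun i j => by simp only [phess, map_sub, Matrix.of_apply, Matrix.sub_apply]

theorem totalDegree_phess_apply_le (q : P2) (i j : Fin 2) :
    (phess q i j).totalDegree ≤ q.totalDegree - 2 :=
  (totalDegree_pderiv_le i _).trans (Nat.sub_le_sub_right (totalDegree_pderiv_le j q) 1)

theorem symTen_apply_zero_zero (v : Fin 2 → P2) : symTen v 0 0 = X 1 * v 0 := by
  simp only [symTen, xPerp, Matrix.of_apply, Matrix.cons_val_zero, smul_eq_C_mul]
  linear_combination (X 1 * v 0) * C_half_mul_two

theorem symTen_apply_one_one (v : Fin 2 → P2) : symTen v 1 1 = -(X 0 * v 1) := by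
  simp only [symTen, xPerp, Matrix.of_apply, Matrix.cons_val_one, Matrix.cons_val_zero,
    smul_eq_C_mul]
  linear_combination -(X 0 * v 1) * C_half_mul_two

theorem xQuad_symTen (v : Fin 2 → P2) : xQuad (symTen v) = 0 := by
  simp only [xQuad, symTen, xPerp, Fin.sum_univ_two, Matrix.of_apply, Matrix.cons_val_zero,
    Matrix.cons_val_one, smul_eq_C_mul]
  ring

theorem symTen_injective : Function.Injective symTen := by
  intro v w h
  funext i
  fin_cases i
  · have h00 := congrFun (congrFun h 0) 0
    rw [symTen_apply_zero_zero, symTen_apply_zero_zero] at h00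
    exact mul_left_cancel₀ (X_ne_zero 1) h00
  · have h11 := congrFun (congrFun h 1) 1
    rw [symTen_apply_one_one, symTen_apply_one_one, neg_inj] at h11
    exact mul_left_cancel₀ (X_ne_zero 0) h11

theorem exists_symTen_eq_of_xQuad_eq_zero (σ : Matrix (Fin 2) (Fin 2) P2) (hσ : σᵀ = σ)
    (h : xQuad σ = 0) : ∃ v, symTen v = σ := by
  have h10 : σ 1 0 = σ 0 1 := by rw [← hσ, Matrix.transpose_apply, hσ]
  simp only [xQuad, Fin.sum_univ_two, h10] at h
  obtain ⟨a, ha⟩ : X 1 ∣ σ 0 0 :=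
    X_dvd_of_X_dvd_X_pow_mul (j := 0) (n := 2) one_ne_zero
      ⟨-(2 * X 0 * σ 0 1 + X 1 * σ 1 1), by linear_combination h⟩
  obtain ⟨b, hb⟩ : X 0 ∣ σ 1 1 :=
    X_dvd_of_X_dvd_X_pow_mul (j := 1) (n := 2) zero_ne_one
      ⟨-(X 0 * σ 0 0 + 2 * X 1 * σ 0 1), by linear_combination h⟩
  have hmid : X 0 * a + 2 * σ 0 1 + X 1 * b = 0 := by
    have hprod : X 0 * X 1 * (X 0 * a + 2 * σ 0 1 + X 1 * b) = 0 := by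
      linear_combination h - X 0 * X 0 * ha - X 1 * X 1 * hb
    exact (mul_eq_zero.mp hprod).resolve_left (mul_ne_zero (X_ne_zero 0) (X_ne_zero 1))
  refine ⟨![a, -b], Matrix.ext fun i j => ?_⟩
  fin_cases i <;> fin_cases j <;>
    simp only [symTen, xPerp, Matrix.of_apply, Fin.zero_eta, Fin.mk_one, Matrix.cons_val_zero,
      Matrix.cons_val_one, smul_eq_C_mul]
  · linear_combination -ha + (X 1 * a) * C_half_mul_two
  · linear_combination -C (1 / 2 : ℝ) * hmid + σ 0 1 * C_half_mul_two
  · linear_combination -C (1 / 2 : ℝ) * hmid + σ 0 1 * C_half_mul_two - h10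
  · linear_combination -hb + (X 0 * b) * C_half_mul_two

theorem totalDegree_le_of_symTen_diag {v : Fin 2 → P2} {D : ℕ}
    (hv : ∀ i, (symTen v i i).totalDegree ≤ D) (i : Fin 2) : (v i).totalDegree ≤ D - 1 := by
  fin_cases i
  · exact totalDegree_le_sub_one_of_X_mul (symTen_apply_zero_zero v ▸ hv 0)
  · exact totalDegree_le_sub_one_of_X_mul (by simpa [symTen_apply_one_one] using hv 1)

theorem eq_of_phess_add_symTen_eq {q q' : P2} {v v' : Fin 2 → P2}
    (h : phess q + symTen v = phess q' + symTen v') : v = v' := by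
  have hdiff : phess (q - q') = symTen v' - symTen v := by
    rw [phess_sub, sub_eq_sub_iff_add_eq_add, h, add_comm]
  have hquad : euler (euler (q - q')) - euler (q - q') = 0 := by
    rw [← xQuad_phess, hdiff, xQuad_sub, xQuad_symTen, xQuad_symTen, sub_self]
  have hzero : phess (q - q') = 0 :=
    Matrix.ext fun i j => pderiv_pderiv_eq_zero_of_euler_euler_sub_eq_zero hquad i j
  exact symTen_injective (sub_eq_zero.mp (hdiff ▸ hzero)).symm

/-- Decomposition `τ = ∇²q + sym(x^⊥ ⊗ v)` of symmetric polynomial matrices of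
degree ≤ k−1, with `v` uniquely determined by `τ`. -/
theorem stmt_16 (k : ℕ) (hk : 2 ≤ k) (τ : Matrix (Fin 2) (Fin 2) P2)
    (hsym : τᵀ = τ) (hdeg : ∀ i j, (τ i j).totalDegree ≤ k - 1) :
    ∃ v : Fin 2 → P2, (∀ i, (v i).totalDegree ≤ k - 2) ∧
      (∃ q : P2, q.totalDegree ≤ k + 1 ∧ τ = phess q + symTen v) ∧
      ∀ v' : Fin 2 → P2, (∀ i, (v' i).totalDegree ≤ k - 2) →
        (∃ q' : P2, q'.totalDegree ≤ k + 1 ∧ τ = phess q' + symTen v') →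
        v' = v := by
  obtain ⟨q, hq, hq_le⟩ := exists_euler_euler_sub_eq (xQuad τ) fun n => coeff_xQuad_eq_zero τ
  have hq_deg : q.totalDegree ≤ k + 1 := hq_le.trans ((totalDegree_xQuad_le hdeg).trans (by omega))
  obtain ⟨v, hv⟩ := exists_symTen_eq_of_xQuad_eq_zero (τ - phess q)
    (by rw [Matrix.transpose_sub, hsym, phess_transpose])
    (by rw [xQuad_sub, xQuad_phess, hq, sub_self])
  have hτ : τ = phess q + symTen v := by rw [hv, add_sub_cancel]
  refine ⟨v, totalDegree_le_of_symTen_diag fun i => ?_, ⟨q, hq_deg, hτ⟩, ?_⟩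
  · rw [hv]
    have hphess : (phess q i i).totalDegree ≤ k - 1 :=
      (totalDegree_phess_apply_le q i i).trans (by omega)
    exact (totalDegree_sub _ _).trans (max_le (hdeg i i) hphess)
  · rintro v' - ⟨q', -, hτ'⟩
    exact (eq_of_phess_add_symTen_eq (hτ.symm.trans hτ')).symm
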